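/- arXiv:1209.0731 — 2 statements merged into one kernel-verified Lean document; each statement's English description precedes it below -/
import Mathlib

section
/- For all integers n ≥ 1 and m ≥ 1 and every real K, |g_{nm}(K) − g_n(K)| ≤ 6|K|/n, where g_n(K) = n^{−3}·log Z_n(K). (The (nm)³ periodic lattice can be changed into m³ identical disjoint periodic cubes of side n by changing at most 6(nm)³/n bond terms, each of magnitude at most |K|.) -/
/-! The torus of side `n * m` is tiled by `m³` cubes of side `n`. Cutting each configuration into
its `m³` restrictions, every bond of the big torus is a bond of one of the cubes except that the
bonds leaving a cube through its last layer in each direction are replaced by the periodic bonds of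
the cube; these are `3 n²` bonds per cube, each changing the bond sum by at most `2`. Hence the
Hamiltonians differ by at most `6 n² m³ |K|` pointwise, and so do the logarithms of the partition
functions, while the decoupled partition function is exactly `Z_n(K) ^ m³`. -/

open scoped BigOperators

/-- The sites of the periodic `n × n × n` cubic lattice: the discrete 3-torus. -/
abbrev Site (n : ℕ) : Type := ZMod n × ZMod n × ZMod n

/-- A spin configuration: a function assigning to each site a spin in `{-1, 1} ⊆ ℤ`. -/
abbrev SpinCfg (n : ℕ) : Type := Site n → ({-1, 1} : Finset ℤ)

/-- The bond sum `S(σ) = ∑_i ∑_{α=1}^3 σ(i)·σ(i+e_α)`, each of the `3n³`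
nearest-neighbor bonds of the torus counted once. -/
def bondSum : (n : ℕ) → SpinCfg n → ℤ
  | 0, _ => 0
  | n + 1, σ =>
      ∑ i : Site (n + 1),
        ((σ i : ℤ) * (σ (i + (1, 0, 0)) : ℤ) + (σ i : ℤ) * (σ (i + (0, 1, 0)) : ℤ) +
          (σ i : ℤ) * (σ (i + (0, 0, 1)) : ℤ))

/-- The zero-field partition function `Z_n(K) = ∑_σ exp (K * S σ)`, for complex `K`. -/
noncomputable def Zc : (n : ℕ) → ℂ → ℂ
  | 0, _ => 0
  | n + 1, K => ∑ σ : SpinCfg (n + 1), Complex.exp (K * (bondSum (n + 1) σ : ℂ))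

/-- The zero-field partition function for real `K`. -/
noncomputable def Zr : (n : ℕ) → ℝ → ℝ
  | 0, _ => 0
  | n + 1, K => ∑ σ : SpinCfg (n + 1), Real.exp (K * (bondSum (n + 1) σ : ℝ))

/-- The free energy per site `g_n(K) = n⁻³ log Z_n(K)` for real `K`. -/
noncomputable def g : (n : ℕ) → ℝ → ℝ
  | 0, _ => 0
  | n + 1, K => Real.log (Zr (n + 1) K) / ((n : ℝ) + 1) ^ 3

/-- Thermal expectation `⟨A⟩_n = Z_n(K)⁻¹ ∑_σ A σ * exp (K * S σ)`, real version. -/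
noncomputable def expec : (n : ℕ) → ℝ → ((SpinCfg n) → ℝ) → ℝ
  | 0, _, _ => 0
  | n + 1, K, A =>
      (∑ σ : SpinCfg (n + 1), A σ * Real.exp (K * (bondSum (n + 1) σ : ℝ))) / Zr (n + 1) K

/-- Numerator `∑_σ (∏_{i ∈ T} σ i) exp (K * S σ)` of the correlation of the set `T` of sites. -/
noncomputable def corrNum : (n : ℕ) → Finset (Site n) → ℂ → ℂ
  | 0, _, _ => 0
  | n + 1, T, K =>
      ∑ σ : SpinCfg (n + 1), (∏ i ∈ T, ((σ i : ℤ) : ℂ)) * Complex.exp (K * (bondSum (n + 1) σ : ℂ))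

/-- The correlation function `C_{n,T}(K)` of a finite set `T` of sites. -/
noncomputable def corr (n : ℕ) (T : Finset (Site n)) (K : ℂ) : ℂ := corrNum n T K / Zc n K

open Finset

lemma Real.log_sum_exp_le_log_sum_exp_add {ι : Type*} [Fintype ι] [Nonempty ι] {f g : ι → ℝ}
    {C : ℝ} (h : ∀ i, f i ≤ g i + C) :
    Real.log (∑ i, Real.exp (f i)) ≤ Real.log (∑ i, Real.exp (g i)) + C := by
  have hpos : ∀ u : ι → ℝ, 0 < ∑ i, Real.exp (u i) := fun u =>
    sum_pos (fun i _ => Real.exp_pos _) univ_nonempty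
  calc Real.log (∑ i, Real.exp (f i))
      ≤ Real.log ((∑ i, Real.exp (g i)) * Real.exp C) := by
        refine Real.log_le_log (hpos f) ?_
        rw [sum_mul]
        gcongr with i
        rw [← Real.exp_add]
        exact Real.exp_le_exp.2 (h i)
    _ = Real.log (∑ i, Real.exp (g i)) + C := by
        rw [Real.log_mul (hpos g).ne' (Real.exp_pos C).ne', Real.log_exp]

lemma Real.abs_log_sum_exp_sub_le {ι : Type*} [Fintype ι] [Nonempty ι] {f g : ι → ℝ}
    {C : ℝ} (h : ∀ i, |f i - g i| ≤ C) :
    |Real.log (∑ i, Real.exp (f i)) - Real.log (∑ i, Real.exp (g i))| ≤ C := by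
  have hfg := Real.log_sum_exp_le_log_sum_exp_add (f := f) (g := g) (C := C) fun i => by
    linarith [(abs_le.1 (h i)).2]
  have hgf := Real.log_sum_exp_le_log_sum_exp_add (f := g) (g := f) (C := C) fun i => by
    linarith [(abs_le.1 (h i)).1]
  exact abs_sub_le_iff.2 ⟨by linarith, by linarith⟩

namespace ZMod

lemma val_add_one_of_ne_neg_one {n : ℕ} [NeZero n] {x : ZMod n} (hx : x ≠ -1) :
    (x + 1).val = x.val + 1 := by
  have hlt : x.val + 1 < n := by
    refine lt_of_le_of_ne (val_lt x) fun h => hx ?_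
    refine eq_neg_of_add_eq_zero_left ?_
    rw [← natCast_zmod_val x, ← Nat.cast_add_one, h, natCast_self]
  rw [← val_cast_of_lt hlt, Nat.cast_add_one, natCast_zmod_val]

/-- `ZMod (n * m)` as `m` consecutive copies of `ZMod n`, via `(y, x) ↦ x + n y`. -/
def blockEquiv (n m : ℕ) [NeZero n] [NeZero m] : ZMod m × ZMod n ≃ ZMod (n * m) where
  toFun p := ((p.2.val + n * p.1.val : ℕ) : ZMod (n * m))
  invFun i := (((i.val / n : ℕ) : ZMod m), (i.val : ZMod n))
  left_inv := by
    rintro ⟨y, x⟩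
    have hlt : x.val + n * y.val < n * m := by
      nlinarith [val_lt x, val_lt y]
    have hdiv : (x.val + n * y.val) / n = y.val := by
      rw [Nat.add_mul_div_left _ _ (Nat.pos_of_neZero n), Nat.div_eq_of_lt (val_lt x),
        zero_add]
    dsimp only
    rw [val_cast_of_lt hlt, hdiv]
    simp
  right_inv i := by
    have hdiv : i.val / n < m := Nat.div_lt_of_lt_mul (val_lt i)
    simp only [val_natCast, Nat.mod_eq_of_lt hdiv, Nat.mod_add_div, natCast_zmod_val]

variable {n m : ℕ} [NeZero n] [NeZero m]

lemma blockEquiv_apply_add_one (y : ZMod m) {x : ZMod n} (hx : x ≠ -1) :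
    blockEquiv n m (y, x + 1) = blockEquiv n m (y, x) + 1 := by
  simp only [blockEquiv, Equiv.coe_fn_mk, val_add_one_of_ne_neg_one hx]
  push_cast
  ring

end ZMod

lemma abs_spin {n : ℕ} (σ : SpinCfg n) (i : Site n) : |(σ i : ℤ)| = 1 := by
  rcases Finset.mem_insert.1 (σ i).2 with h | h <;> simp_all

def siteBond {n : ℕ} (σ : SpinCfg n) (i : Site n) : ℤ :=
  (σ i : ℤ) * (σ (i + (1, 0, 0)) : ℤ) + (σ i : ℤ) * (σ (i + (0, 1, 0)) : ℤ) +
    (σ i : ℤ) * (σ (i + (0, 0, 1)) : ℤ)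

lemma bondSum_eq_sum_siteBond (n : ℕ) [NeZero n] (σ : SpinCfg n) :
    bondSum n σ = ∑ i, siteBond σ i := by
  obtain ⟨k, rfl⟩ := Nat.exists_eq_succ_of_ne_zero (NeZero.ne n)
  rfl

lemma Zr_eq_sum (n : ℕ) [NeZero n] (K : ℝ) :
    Zr n K = ∑ σ : SpinCfg n, Real.exp (K * bondSum n σ) := by
  obtain ⟨k, rfl⟩ := Nat.exists_eq_succ_of_ne_zero (NeZero.ne n)
  rfl

lemma g_eq (n : ℕ) [NeZero n] (K : ℝ) : g n K = Real.log (Zr n K) / n ^ 3 := by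
  obtain ⟨k, rfl⟩ := Nat.exists_eq_succ_of_ne_zero (NeZero.ne n)
  simp [g]

instance (n : ℕ) : Nonempty (SpinCfg n) := ⟨fun _ => ⟨1, by decide⟩⟩

section Blocks

variable (n m : ℕ) [NeZero n] [NeZero m]

/-- The site `a` of the cube with index `b` in the torus of side `n * m`. -/
def siteEquiv : Site m × Site n ≃ Site (n * m) :=
  (Equiv.prodProdProdComm _ _ _ _).trans <| (ZMod.blockEquiv n m).prodCongr <|
    (Equiv.prodProdProdComm _ _ _ _).trans <|
      (ZMod.blockEquiv n m).prodCongr (ZMod.blockEquiv n m)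

lemma siteEquiv_apply (b : Site m) (a : Site n) :
    siteEquiv n m (b, a) = (ZMod.blockEquiv n m (b.1, a.1), ZMod.blockEquiv n m (b.2.1, a.2.1),
      ZMod.blockEquiv n m (b.2.2, a.2.2)) := rfl

def blockCfgEquiv : SpinCfg (n * m) ≃ (Site m → SpinCfg n) :=
  ((siteEquiv n m).symm.arrowCongr (Equiv.refl _)).trans (Equiv.curry _ _ _)

lemma blockCfgEquiv_apply (σ : SpinCfg (n * m)) (b : Site m) (a : Site n) :
    blockCfgEquiv n m σ b a = σ (siteEquiv n m (b, a)) := rfl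

variable {n m}

lemma siteEquiv_add_of_ne_neg_one (b : Site m) {a : Site n} :
    (a.1 ≠ -1 → siteEquiv n m (b, a + (1, 0, 0)) = siteEquiv n m (b, a) + (1, 0, 0)) ∧
    (a.2.1 ≠ -1 → siteEquiv n m (b, a + (0, 1, 0)) = siteEquiv n m (b, a) + (0, 1, 0)) ∧
    (a.2.2 ≠ -1 → siteEquiv n m (b, a + (0, 0, 1)) = siteEquiv n m (b, a) + (0, 0, 1)) := by
  refine ⟨fun h => ?_, fun h => ?_, fun h => ?_⟩ <;>
    simp [siteEquiv_apply, ZMod.blockEquiv_apply_add_one _ h]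

end Blocks

/-- Weight `2` of the last layer `x = -1` of a cube in one direction, whose outgoing bonds are
rerouted when the cube is cut out of a larger torus. -/
def seamWeight {n : ℕ} (x : ZMod n) : ℤ := if x = -1 then 2 else 0

lemma sum_seamWeight (n : ℕ) [NeZero n] : ∑ x : ZMod n, seamWeight x = 2 := by
  simp [seamWeight]

lemma sum_seamWeight_site (n : ℕ) [NeZero n] :
    ∑ a : Site n, (seamWeight a.1 + seamWeight a.2.1 + seamWeight a.2.2) = 6 * n ^ 2 := by
  simp only [sum_add_distrib, Fintype.sum_prod_type, sum_const, card_univ, Fintype.card_prod,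
    ZMod.card, ← mul_sum, sum_seamWeight, nsmul_eq_mul]
  push_cast
  ring

lemma abs_bond_sub_le {N n : ℕ} (σ : SpinCfg N) (i j j' : Site N) {x : ZMod n}
    (h : x ≠ -1 → j = j') :
    |(σ i : ℤ) * σ j - (σ i : ℤ) * σ j'| ≤ seamWeight x := by
  unfold seamWeight
  split_ifs with hx
  · calc |(σ i : ℤ) * σ j - (σ i : ℤ) * σ j'|
          ≤ |(σ i : ℤ) * σ j| + |(σ i : ℤ) * σ j'| := abs_sub _ _
      _ = 2 := by simp only [abs_mul, abs_spin]; norm_num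
  · simp [h hx]

section Comparison

variable {n m : ℕ} [NeZero n] [NeZero m]

lemma abs_siteBond_sub_siteBond_blockCfgEquiv_le (σ : SpinCfg (n * m)) (b : Site m)
    (a : Site n) :
    |siteBond σ (siteEquiv n m (b, a)) - siteBond (blockCfgEquiv n m σ b) a| ≤
      seamWeight a.1 + seamWeight a.2.1 + seamWeight a.2.2 := by
  obtain ⟨h₁, h₂, h₃⟩ := siteEquiv_add_of_ne_neg_one (n := n) b (a := a)
  set i := siteEquiv n m (b, a)
  calc |siteBond σ i - siteBond (blockCfgEquiv n m σ b) a|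
      = |((σ i : ℤ) * σ (i + (1, 0, 0)) - σ i * σ (siteEquiv n m (b, a + (1, 0, 0)))) +
          ((σ i : ℤ) * σ (i + (0, 1, 0)) - σ i * σ (siteEquiv n m (b, a + (0, 1, 0)))) +
          ((σ i : ℤ) * σ (i + (0, 0, 1)) - σ i * σ (siteEquiv n m (b, a + (0, 0, 1))))| := by
        simp only [siteBond, blockCfgEquiv_apply, i]
        ring_nf
    _ ≤ _ := (abs_add_three _ _ _).trans <| add_le_add_three
        (abs_bond_sub_le σ _ _ _ fun h => (h₁ h).symm)
        (abs_bond_sub_le σ _ _ _ fun h => (h₂ h).symm)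
        (abs_bond_sub_le σ _ _ _ fun h => (h₃ h).symm)

lemma abs_bondSum_sub_sum_bondSum_blockCfgEquiv_le (σ : SpinCfg (n * m)) :
    |bondSum (n * m) σ - ∑ b, bondSum n (blockCfgEquiv n m σ b)| ≤ 6 * n ^ 2 * m ^ 3 := by
  calc |bondSum (n * m) σ - ∑ b, bondSum n (blockCfgEquiv n m σ b)|
      = |∑ b, ∑ a,
          (siteBond σ (siteEquiv n m (b, a)) - siteBond (blockCfgEquiv n m σ b) a)| := by
        simp only [bondSum_eq_sum_siteBond, ← (siteEquiv n m).sum_comp, Fintype.sum_prod_type,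
          ← sum_sub_distrib]
    _ ≤ ∑ _b : Site m, ∑ a : Site n, (seamWeight a.1 + seamWeight a.2.1 + seamWeight a.2.2) :=
        (abs_sum_le_sum_abs _ _).trans <| sum_le_sum fun b _ =>
          (abs_sum_le_sum_abs _ _).trans <| sum_le_sum fun a _ =>
            abs_siteBond_sub_siteBond_blockCfgEquiv_le σ b a
    _ = 6 * n ^ 2 * m ^ 3 := by
        rw [sum_seamWeight_site, sum_const, card_univ]
        simp only [Fintype.card_prod, ZMod.card, nsmul_eq_mul]
        push_cast
        ring

lemma sum_exp_sum_bondSum_blockCfgEquiv (K : ℝ) :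
    ∑ σ : SpinCfg (n * m), Real.exp (K * ∑ b, bondSum n (blockCfgEquiv n m σ b)) =
      Zr n K ^ m ^ 3 := by
  calc ∑ σ : SpinCfg (n * m), Real.exp (K * ∑ b, bondSum n (blockCfgEquiv n m σ b))
      = ∑ τ : Site m → SpinCfg n, ∏ b, Real.exp (K * bondSum n (τ b)) := by
        rw [← (blockCfgEquiv n m).symm.sum_comp]
        simp only [Equiv.apply_symm_apply, Int.cast_sum, mul_sum, Real.exp_sum]
    _ = Zr n K ^ m ^ 3 := by
        rw [← Fintype.prod_sum fun _ τ => Real.exp (K * bondSum n τ), prod_const, Zr_eq_sum,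
          card_univ]
        simp only [Fintype.card_prod, ZMod.card]
        ring

lemma abs_log_Zr_mul_sub_le (K : ℝ) :
    |Real.log (Zr (n * m) K) - m ^ 3 * Real.log (Zr n K)| ≤ 6 * |K| * n ^ 2 * m ^ 3 := by
  have hpow : (m : ℝ) ^ 3 * Real.log (Zr n K) = Real.log (Zr n K ^ m ^ 3) := by
    rw [Real.log_pow]
    push_cast
    rfl
  rw [hpow, ← sum_exp_sum_bondSum_blockCfgEquiv, Zr_eq_sum]
  refine Real.abs_log_sum_exp_sub_le fun σ => ?_
  have h := abs_bondSum_sub_sum_bondSum_blockCfgEquiv_le σ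
  rw [← mul_sub, abs_mul, mul_assoc, mul_assoc, mul_left_comm, ← mul_assoc 6]
  gcongr
  exact_mod_cast h

end Comparison

theorem freeEnergy_cube_compare_general (n m : ℕ) (hm : 1 ≤ m) (K : ℝ) :
    |g (n * m) K - g n K| ≤ 6 * |K| / (n : ℝ) := by
  rcases n.eq_zero_or_pos with rfl | hn
  · simp [g]
  have : NeZero n := ⟨hn.ne'⟩
  have : NeZero m := ⟨by omega⟩
  have key := abs_log_Zr_mul_sub_le (n := n) (m := m) K
  calc |g (n * m) K - g n K|
      = |Real.log (Zr (n * m) K) - m ^ 3 * Real.log (Zr n K)| / (n ^ 3 * m ^ 3) := by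
        rw [g_eq, g_eq, ← abs_of_pos (by positivity : (0 : ℝ) < n ^ 3 * m ^ 3), ← abs_div]
        push_cast
        field_simp
    _ ≤ 6 * |K| * n ^ 2 * m ^ 3 / (n ^ 3 * m ^ 3) := by gcongr
    _ = 6 * |K| / n := by field_simp

/-- for all `n, m ≥ 1` and real `K`,
`|g_{nm}(K) − g_n(K)| ≤ 6|K|/n`, where `g_n(K) = n⁻³ log Z_n(K)`. -/
theorem freeEnergy_cube_compare (n m : ℕ) (hn : 1 ≤ n) (hm : 1 ≤ m) (K : ℝ) :
    |g (n * m) K - g n K| ≤ 6 * |K| / (n : ℝ) :=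
  freeEnergy_cube_compare_general n m hm K
end

section
/- For every complex t with |t| < 2−√3, 6·|a₁(t)| + 20·|a₃(t)| + 6·|a₅(t)| ≤ r(|t|), where r(x) = 2x(3−x²)(1−3x²)/((1−x²)(1−14x²+x⁴)) for 0 ≤ x < 2−√3. (Each |a_i(t)| is maximal, for given |t|, when t is purely imaginary, and at t = i x the three contributions have the same phase.) -/
/-!
With `u = t²`, the denominators factor as `1 + 6u + u² = (1 + (3+2√2)u)(1 + (3-2√2)u)` and
`1 + 14u + u² = (1 + (7+4√3)u)(1 + (7-4√3)u)`, all factors of the form `1 + d u` with `d > 0`.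
So `a₃` and `a₅` are monomials over such products, and `a₁/t` splits into partial fractions
`c / (1 + d u)` with `c ≥ 0`. Since `‖1 + d u‖ ≥ 1 - d ‖u‖`, each `‖aₖ(t)‖` is at most the same
expression evaluated at `u = -|t|²`, i.e. `-i aₖ(i|t|)`; these three majorants add up to `r(|t|)`.
-/

open scoped BigOperators

/-- Coefficient `a₁(t)` for complex `t`. -/
noncomputable def a1C (t : ℂ) : ℂ :=
  t * (1 + 16 * t ^ 2 + 46 * t ^ 4 + 16 * t ^ 6 + t ^ 8) /
    ((1 + t ^ 2) * (1 + 6 * t ^ 2 + t ^ 4) * (1 + 14 * t ^ 2 + t ^ 4))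

/-- Coefficient `a₃(t)` for complex `t`. -/
noncomputable def a3C (t : ℂ) : ℂ :=
  -2 * t ^ 3 / ((1 + t ^ 2) * (1 + 14 * t ^ 2 + t ^ 4))

/-- Coefficient `a₅(t)` for complex `t`. -/
noncomputable def a5C (t : ℂ) : ℂ :=
  16 * t ^ 5 / ((1 + t ^ 2) * (1 + 6 * t ^ 2 + t ^ 4) * (1 + 14 * t ^ 2 + t ^ 4))

/-- The bound `r(x) = 2x(3−x²)(1−3x²)/((1−x²)(1−14x²+x⁴))`. -/
noncomputable def rFun (x : ℝ) : ℝ :=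
  2 * x * (3 - x ^ 2) * (1 - 3 * x ^ 2) / ((1 - x ^ 2) * (1 - 14 * x ^ 2 + x ^ 4))

theorem exists_factorization_of_one_sub_mul_add_sq_pos {σ y : ℝ} (hσ : 2 ≤ σ) (hy1 : y < 1)
    (hy : 0 < 1 - σ * y + y ^ 2) :
    ∃ p q : ℝ, 0 < q ∧ q ≤ p ∧ p + q = σ ∧ p * q = 1 ∧ 0 < 1 - p * y ∧ 0 < 1 - q * y := by
  obtain ⟨s, hs0, hs⟩ : ∃ s : ℝ, 0 ≤ s ∧ s ^ 2 = σ ^ 2 - 4 :=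
    ⟨√(σ ^ 2 - 4), Real.sqrt_nonneg _, Real.sq_sqrt (by nlinarith)⟩
  have hsσ : s < σ := by nlinarith
  have hq1 : σ - s ≤ 2 := by nlinarith
  have hqy : 0 < 1 - (σ - s) / 2 * y := by nlinarith
  refine ⟨(σ + s) / 2, (σ - s) / 2, by linarith, by linarith, by ring, by nlinarith, ?_, hqy⟩
  have hfac : (1 - (σ + s) / 2 * y) * (1 - (σ - s) / 2 * y) = 1 - σ * y + y ^ 2 := by
    linear_combination (-y ^ 2 / 4) * hs
  exact pos_of_mul_pos_left (hfac ▸ hy) hqy.le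

theorem one_sub_mul_norm_le_norm_one_add_mul {d : ℝ} (hd : 0 ≤ d) (u : ℂ) :
    1 - d * ‖u‖ ≤ ‖1 + d * u‖ := by
  simpa [abs_of_nonneg hd] using norm_sub_le_norm_add (1 : ℂ) (d * u)

theorem norm_div_one_add_mul_le {c d : ℝ} (hc : 0 ≤ c) (hd : 0 ≤ d) {u : ℂ}
    (hu : 0 < 1 - d * ‖u‖) : ‖(c : ℂ) / (1 + d * u)‖ ≤ c / (1 - d * ‖u‖) := by
  rw [norm_div, Complex.norm_of_nonneg hc]
  exact div_le_div_of_nonneg_left hc hu (one_sub_mul_norm_le_norm_one_add_mul hd u)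

theorem one_add_mul_mul_one_add_mul {R : Type*} [CommRing R] {p q : R} (hpq : p * q = 1) (u : R) :
    (1 + p * u) * (1 + q * u) = 1 + (p + q) * u + u ^ 2 := by
  linear_combination u ^ 2 * hpq

theorem one_sub_mul_norm_add_sq_le_norm {σ : ℝ} (hσ : 2 ≤ σ) {u : ℂ} (hu1 : ‖u‖ < 1)
    (hu : 0 < 1 - σ * ‖u‖ + ‖u‖ ^ 2) :
    1 - σ * ‖u‖ + ‖u‖ ^ 2 ≤ ‖1 + σ * u + u ^ 2‖ := by
  obtain ⟨p, q, hq, hqp, rfl, hpq, hpy, hqy⟩ :=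
    exists_factorization_of_one_sub_mul_add_sq_pos hσ hu1 hu
  have hpq' : (p : ℂ) * q = 1 := by exact_mod_cast hpq
  calc 1 - (p + q) * ‖u‖ + ‖u‖ ^ 2 = (1 - p * ‖u‖) * (1 - q * ‖u‖) := by
        linear_combination (-‖u‖ ^ 2) * hpq
    _ ≤ ‖1 + p * u‖ * ‖1 + q * u‖ :=
        mul_le_mul (one_sub_mul_norm_le_norm_one_add_mul (by linarith) u)
          (one_sub_mul_norm_le_norm_one_add_mul hq.le u) hqy.le (norm_nonneg _)
    _ = ‖1 + ((p + q : ℝ) : ℂ) * u + u ^ 2‖ := by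
        rw [← norm_mul, one_add_mul_mul_one_add_mul hpq', Complex.ofReal_add]

theorem div_mul_eq_div_add_div {K : Type*} [Field K] {p q u : K} (hpq : p ≠ q)
    (hp : 1 + p * u ≠ 0) (hq : 1 + q * u ≠ 0) :
    (1 + u) / ((1 + p * u) * (1 + q * u)) =
      (p - 1) / (p - q) / (1 + p * u) + (1 - q) / (p - q) / (1 + q * u) := by
  have : p - q ≠ 0 := sub_ne_zero.mpr hpq
  rw [div_div, div_div, div_add_div _ _ (mul_ne_zero this hp) (mul_ne_zero this hq),
    div_eq_div_iff (mul_ne_zero hp hq) (mul_ne_zero (mul_ne_zero this hp) (mul_ne_zero this hq))]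
  ring

theorem norm_one_add_div_le {σ : ℝ} (hσ : 2 < σ) {u : ℂ} (hu1 : ‖u‖ < 1)
    (hu : 0 < 1 - σ * ‖u‖ + ‖u‖ ^ 2) :
    ‖(1 + u) / (1 + σ * u + u ^ 2)‖ ≤ (1 - ‖u‖) / (1 - σ * ‖u‖ + ‖u‖ ^ 2) := by
  obtain ⟨p, q, hq, hqp, rfl, hpq, hpy, hqy⟩ :=
    exists_factorization_of_one_sub_mul_add_sq_pos hσ.le hu1 hu
  have hqp : q < p := lt_of_le_of_ne hqp fun h => by subst h; nlinarith
  have hp1 : 1 ≤ p := by nlinarith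
  have hq1 : q ≤ 1 := by nlinarith
  have hpq' : (p : ℂ) * q = 1 := by exact_mod_cast hpq
  have hne : ∀ {d : ℝ}, 0 ≤ d → 0 < 1 - d * ‖u‖ → 1 + (d : ℂ) * u ≠ 0 := fun hd h =>
    norm_pos_iff.mp (h.trans_le (one_sub_mul_norm_le_norm_one_add_mul hd u))
  have hreal : (1 - ‖u‖) / (1 - (p + q) * ‖u‖ + ‖u‖ ^ 2) =
      (p - 1) / (p - q) / (1 - p * ‖u‖) + (1 - q) / (p - q) / (1 - q * ‖u‖) := by
    have := div_mul_eq_div_add_div (u := -‖u‖) hqp.ne' (by linarith) (by linarith)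
    simp only [mul_neg, ← sub_eq_add_neg] at this
    rw [← this]
    congr 1
    linear_combination (-‖u‖ ^ 2) * hpq
  have hA : 0 ≤ (p - 1) / (p - q) := div_nonneg (by linarith) (by linarith)
  have hB : 0 ≤ (1 - q) / (p - q) := div_nonneg (by linarith) (by linarith)
  rw [hreal, Complex.ofReal_add, ← one_add_mul_mul_one_add_mul hpq',
    div_mul_eq_div_add_div (by exact_mod_cast hqp.ne') (hne (by linarith) hpy) (hne hq.le hqy)]
  calc _ ≤ _ := norm_add_le _ _
    _ ≤ _ := by
      gcongr
      · exact_mod_cast norm_div_one_add_mul_le hA (by linarith) hpy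
      · exact_mod_cast norm_div_one_add_mul_le hB hq.le hqy

theorem le_norm_denominators {t : ℂ} (h1 : ‖t‖ ^ 2 < 1)
    (h14 : 0 < 1 - 14 * ‖t‖ ^ 2 + ‖t‖ ^ 4) :
    1 - ‖t‖ ^ 2 ≤ ‖1 + t ^ 2‖ ∧
      1 - 6 * ‖t‖ ^ 2 + ‖t‖ ^ 4 ≤ ‖1 + 6 * t ^ 2 + t ^ 4‖ ∧
      1 - 14 * ‖t‖ ^ 2 + ‖t‖ ^ 4 ≤ ‖1 + 14 * t ^ 2 + t ^ 4‖ := by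
  have hu : ‖t ^ 2‖ = ‖t‖ ^ 2 := norm_pow t 2
  have key : ∀ σ : ℝ, 2 ≤ σ → 0 < 1 - σ * ‖t‖ ^ 2 + ‖t‖ ^ 4 →
      1 - σ * ‖t‖ ^ 2 + ‖t‖ ^ 4 ≤ ‖1 + σ * t ^ 2 + t ^ 4‖ := fun σ hσ h => by
    have := one_sub_mul_norm_add_sq_le_norm hσ (u := t ^ 2) (by rwa [hu]) (by rw [hu]; linarith)
    simpa only [norm_pow, ← pow_mul] using this
  refine ⟨?_, ?_, ?_⟩
  · have := norm_sub_le_norm_add (1 : ℂ) (t ^ 2)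
    rw [norm_one, hu] at this
    linarith
  · simpa using key 6 (by norm_num) (by nlinarith)
  · simpa using key 14 (by norm_num) h14

theorem norm_one_add_sq_div_le {σ : ℝ} (hσ : 2 < σ) {t : ℂ} (h1 : ‖t‖ ^ 2 < 1)
    (h : 0 < 1 - σ * ‖t‖ ^ 2 + ‖t‖ ^ 4) :
    ‖(1 + t ^ 2) / (1 + σ * t ^ 2 + t ^ 4)‖ ≤
      (1 - ‖t‖ ^ 2) / (1 - σ * ‖t‖ ^ 2 + ‖t‖ ^ 4) := by
  have hu : ‖t ^ 2‖ = ‖t‖ ^ 2 := norm_pow t 2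
  have := norm_one_add_div_le hσ (u := t ^ 2) (by rwa [hu]) (by rw [hu]; linarith)
  simpa only [norm_pow, ← pow_mul] using this

noncomputable def a1Bound (x : ℝ) : ℝ :=
  x * (3⁻¹ / (1 - x ^ 2) + 2⁻¹ * ((1 - x ^ 2) / (1 - 6 * x ^ 2 + x ^ 4)) +
    6⁻¹ * ((1 - x ^ 2) / (1 - 14 * x ^ 2 + x ^ 4)))

noncomputable def a3Bound (x : ℝ) : ℝ :=
  2 * x ^ 3 / ((1 - x ^ 2) * (1 - 14 * x ^ 2 + x ^ 4))

noncomputable def a5Bound (x : ℝ) : ℝ :=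
  16 * x ^ 5 / ((1 - x ^ 2) * (1 - 6 * x ^ 2 + x ^ 4) * (1 - 14 * x ^ 2 + x ^ 4))

theorem a1C_eq {t : ℂ} (h1 : 1 + t ^ 2 ≠ 0) (h6 : 1 + 6 * t ^ 2 + t ^ 4 ≠ 0)
    (h14 : 1 + 14 * t ^ 2 + t ^ 4 ≠ 0) :
    a1C t = t * (3⁻¹ / (1 + t ^ 2) + 2⁻¹ * ((1 + t ^ 2) / (1 + 6 * t ^ 2 + t ^ 4)) +
      6⁻¹ * ((1 + t ^ 2) / (1 + 14 * t ^ 2 + t ^ 4))) := by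
  rw [a1C, mul_div_assoc' 2⁻¹, mul_div_assoc' 6⁻¹, div_add_div _ _ h1 h6,
    div_add_div _ _ (mul_ne_zero h1 h6) h14, mul_div_assoc',
    div_eq_div_iff (by simp [*]) (by simp [*])]
  ring

theorem norm_a1C_le {t : ℂ} (h1 : ‖t‖ ^ 2 < 1) (h14 : 0 < 1 - 14 * ‖t‖ ^ 2 + ‖t‖ ^ 4) :
    ‖a1C t‖ ≤ a1Bound ‖t‖ := by
  obtain ⟨e1, e6, e14⟩ := le_norm_denominators h1 h14
  have h6 : 0 < 1 - 6 * ‖t‖ ^ 2 + ‖t‖ ^ 4 := by nlinarith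
  have hne : ∀ {z : ℂ} {r : ℝ}, 0 < r → r ≤ ‖z‖ → z ≠ 0 := fun hr h =>
    norm_pos_iff.mp (hr.trans_le h)
  rw [a1C_eq (hne (by linarith) e1) (hne h6 e6) (hne h14 e14), a1Bound, norm_mul]
  gcongr
  refine (norm_add₃_le ..).trans (add_le_add_three ?_ ?_ ?_)
  · rw [norm_div, norm_inv, Complex.norm_ofNat]
    gcongr
  · rw [norm_mul, norm_inv, Complex.norm_ofNat]
    gcongr
    exact_mod_cast norm_one_add_sq_div_le (σ := 6) (by norm_num) h1 h6
  · rw [norm_mul, norm_inv, Complex.norm_ofNat]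
    gcongr
    exact_mod_cast norm_one_add_sq_div_le (σ := 14) (by norm_num) h1 h14

theorem norm_a3C_le {t : ℂ} (h1 : ‖t‖ ^ 2 < 1) (h14 : 0 < 1 - 14 * ‖t‖ ^ 2 + ‖t‖ ^ 4) :
    ‖a3C t‖ ≤ a3Bound ‖t‖ := by
  obtain ⟨e1, -, e14⟩ := le_norm_denominators h1 h14
  rw [a3C, a3Bound, norm_div, norm_mul, norm_mul, norm_pow, norm_neg, Complex.norm_ofNat]
  gcongr

theorem norm_a5C_le {t : ℂ} (h1 : ‖t‖ ^ 2 < 1) (h14 : 0 < 1 - 14 * ‖t‖ ^ 2 + ‖t‖ ^ 4) :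
    ‖a5C t‖ ≤ a5Bound ‖t‖ := by
  obtain ⟨e1, e6, e14⟩ := le_norm_denominators h1 h14
  have h6 : 0 < 1 - 6 * ‖t‖ ^ 2 + ‖t‖ ^ 4 := by nlinarith
  rw [a5C, a5Bound, norm_div, norm_mul, norm_mul, norm_mul, norm_pow, Complex.norm_ofNat]
  gcongr

theorem rFun_eq {x : ℝ} (h1 : x ^ 2 < 1) (h14 : 0 < 1 - 14 * x ^ 2 + x ^ 4) :
    rFun x = 6 * a1Bound x + 20 * a3Bound x + 6 * a5Bound x := by
  have h1' : 1 - x ^ 2 ≠ 0 := by linarith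
  have h6 : 1 - 6 * x ^ 2 + x ^ 4 ≠ 0 := by nlinarith
  rw [rFun, a1Bound, a3Bound, a5Bound]
  generalize hP : 1 - 6 * x ^ 2 + x ^ 4 = P at h6 ⊢
  generalize hQ : 1 - 14 * x ^ 2 + x ^ 4 = Q at h14 ⊢
  field_simp
  subst hP hQ
  ring

/-- `2 - √3` is the least positive root of `1 - 14x² + x⁴ = (1 - 4x + x²)(1 + 4x + x²)`. -/
theorem sq_lt_one_and_quartic_pos_of_lt_two_sub_sqrt_three {x : ℝ} (hx0 : 0 ≤ x)
    (hx : x < 2 - √3) :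
    x ^ 2 < 1 ∧ 0 < 1 - 14 * x ^ 2 + x ^ 4 := by
  have h3 : √3 ^ 2 = 3 := Real.sq_sqrt (by norm_num)
  have hs : 3 / 2 < √3 := by nlinarith [Real.sqrt_nonneg 3]
  have hquad : 0 < 1 - 4 * x + x ^ 2 := by nlinarith
  constructor
  · nlinarith
  · nlinarith [mul_pos hquad (by positivity : 0 < 1 + 4 * x + x ^ 2)]

/-- for complex `t` with `|t| < 2 − √3`,
`6|a₁(t)| + 20|a₃(t)| + 6|a₅(t)| ≤ r(|t|)`. -/
theorem norm_combination_le_rFun (t : ℂ) (ht : ‖t‖ < 2 - Real.sqrt 3) :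
    6 * ‖a1C t‖ + 20 * ‖a3C t‖ + 6 * ‖a5C t‖ ≤
      rFun ‖t‖ := by
  obtain ⟨h1, h14⟩ := sq_lt_one_and_quartic_pos_of_lt_two_sub_sqrt_three (norm_nonneg t) ht
  rw [rFun_eq h1 h14]
  gcongr
  exacts [norm_a1C_le h1 h14, norm_a3C_le h1 h14, norm_a5C_le h1 h14]
end
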